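/- Let d, M, l ≥ 1 be integers, let P : ℤ^d → ℤ^M be any function, and let w, a : ℤ^d → ℂ with w finitely supported. Then ∫_{𝕋^M} |Σ_{n ∈ ℤ^d} w(n) a(n) e^{−2πi P(n)·ξ}|^{2l} dξ ≤ (sup_{t ∈ ℤ^M} Σ_{(n⁽¹⁾,…,n⁽ˡ⁾) ∈ (ℤ^d)^l : P(n⁽¹⁾)+⋯+P(n⁽ˡ⁾) = t} Π_{i=1}^{l} |w(n⁽ⁱ⁾)|²) · (Σ_{n ∈ ℤ^d} |a(n)|²)^l. -/

import Mathlib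

/-!
Raising the exponential sum to the `l`-th power turns it into a trigonometric polynomial on
`𝕋^M` whose coefficient at the frequency `-t` is the sum of `∏ⱼ w(n⁽ʲ⁾) a(n⁽ʲ⁾)` over the
`l`-tuples with `P(n⁽¹⁾) + ⋯ + P(n⁽ˡ⁾) = t`. By Parseval the `2l`-th moment is the sum of the
squared moduli of these coefficients. Cauchy–Schwarz on each fibre bounds this by the largest
`w`-mass of a fibre times the sum of `∏ⱼ |a(n⁽ʲ⁾)|²` over all tuples, which is `(Σ |a(n)|²)^l`.
-/

open MeasureTheory UnitAddTorus
open scoped ENNReal ComplexConjugate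

theorem integral_fourier_unitAddCircle (n : ℤ) :
    ∫ x : UnitAddCircle, fourier n x = if n = 0 then 1 else 0 := by
  split_ifs with hn
  · simp [hn, Measure.real, AddCircle.measure_univ]
  · exact integral_eq_zero_of_add_right_eq_neg (fourier_add_half_inv_index hn one_pos)

section Torus

variable {d : Type*} [Fintype d]

theorem mFourier_sum {ι : Type*} (s : Finset ι) (n : ι → d → ℤ) (x : UnitAddTorus d) :
    mFourier (∑ i ∈ s, n i) x = ∏ i ∈ s, mFourier (n i) x := by
  classical
  induction s using Finset.induction_on with
  | empty => simp [mFourier_zero]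
  | insert i s hi ih => rw [Finset.sum_insert hi, Finset.prod_insert hi, mFourier_add, ih]

theorem integral_mFourier (n : d → ℤ) :
    ∫ x : UnitAddTorus d, mFourier n x = if n = 0 then 1 else 0 := by
  simp only [mFourier, ContinuousMap.coe_mk]
  rw [integral_fintype_prod_volume_eq_prod]
  simp only [integral_fourier_unitAddCircle]
  split_ifs with hn
  · simp [hn]
  · obtain ⟨i, hi⟩ := Function.ne_iff.mp hn
    exact Finset.prod_eq_zero (Finset.mem_univ i) (if_neg hi)

theorem integrable_mFourier_mul (n : d → ℤ) (c : ℂ) :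
    Integrable (fun x : UnitAddTorus d => c * mFourier n x) :=
  (continuous_const.mul (mFourier n).continuous).integrable_of_hasCompactSupport
    (.of_compactSpace _)

theorem integral_norm_sum_mFourier_sq (s : Finset (d → ℤ)) (c : (d → ℤ) → ℂ) :
    ∫ x, ‖∑ k ∈ s, c k * mFourier k x‖ ^ 2 = ∑ k ∈ s, ‖c k‖ ^ 2 := by
  classical
  have hexpand (x : UnitAddTorus d) : ((‖∑ k ∈ s, c k * mFourier k x‖ ^ 2 : ℝ) : ℂ) =
      ∑ k ∈ s, ∑ k' ∈ s, conj (c k) * c k' * mFourier (k' + -k) x := by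
    rw [Complex.ofReal_pow, ← Complex.conj_mul', map_sum, Finset.sum_mul_sum]
    refine Finset.sum_congr rfl fun k _ => Finset.sum_congr rfl fun k' _ => ?_
    rw [mFourier_add, mFourier_neg, map_mul]
    ring
  apply Complex.ofReal_injective
  rw [← integral_complex_ofReal, integral_congr_ae (.of_forall hexpand),
    integral_finsetSum _ fun k _ => integrable_finsetSum _ fun k' _ =>
      integrable_mFourier_mul _ _]
  push_cast
  refine Finset.sum_congr rfl fun k hk => ?_
  simp only [integral_finsetSum _ fun k' _ => integrable_mFourier_mul _ _,
    integral_const_mul, integral_mFourier, add_neg_eq_zero, mul_ite, mul_one, mul_zero,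
    Finset.sum_ite_eq', if_pos hk, Complex.conj_mul']

theorem lintegral_enorm_sum_mFourier_sq (s : Finset (d → ℤ)) (c : (d → ℤ) → ℂ) :
    ∫⁻ x, ‖∑ k ∈ s, c k * mFourier k x‖ₑ ^ 2 = ∑ k ∈ s, ‖c k‖ₑ ^ 2 := by
  have hint : Integrable fun x : UnitAddTorus d => ‖∑ k ∈ s, c k * mFourier k x‖ ^ 2 :=
    (by fun_prop : Continuous fun x => ‖∑ k ∈ s, c k * mFourier k x‖ ^ 2)
      |>.integrable_of_hasCompactSupport (.of_compactSpace _)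
  simp only [← ofReal_norm, ← ENNReal.ofReal_pow (norm_nonneg _)]
  rw [← ofReal_integral_eq_lintegral_ofReal hint (.of_forall fun _ => by positivity),
    integral_norm_sum_mFourier_sq, ENNReal.ofReal_sum_of_nonneg fun _ _ => by positivity]

theorem lintegral_enorm_sum_mul_mFourier_comp_sq {ι : Type*} (T : Finset ι) (f : ι → d → ℤ)
    (c : ι → ℂ) :
    ∫⁻ x, ‖∑ i ∈ T, c i * mFourier (f i) x‖ₑ ^ 2 =
      ∑ k ∈ T.image f, ‖∑ i ∈ T with f i = k, c i‖ₑ ^ 2 := by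
  classical
  have hgroup (x : UnitAddTorus d) : ∑ i ∈ T, c i * mFourier (f i) x =
      ∑ k ∈ T.image f, (∑ i ∈ T with f i = k, c i) * mFourier k x := by
    rw [← Finset.sum_fiberwise_of_maps_to fun i hi => Finset.mem_image_of_mem f hi]
    refine Finset.sum_congr rfl fun k _ => ?_
    rw [Finset.sum_mul]
    exact Finset.sum_congr rfl fun i hi => by rw [(Finset.mem_filter.mp hi).2]
  simp only [hgroup, lintegral_enorm_sum_mFourier_sq]

theorem sum_mul_mFourier_pow {ι : Type*} (s : Finset ι) (g : ι → ℂ) (f : ι → d → ℤ) (l : ℕ)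
    (x : UnitAddTorus d) :
    (∑ i ∈ s, g i * mFourier (f i) x) ^ l =
      ∑ p ∈ Fintype.piFinset fun _ : Fin l => s,
        (∏ j, g (p j)) * mFourier (∑ j, f (p j)) x := by
  classical
  rw [← Fin.prod_const, Finset.prod_univ_sum]
  simp only [Finset.prod_mul_distrib, mFourier_sum]

end Torus

theorem enorm_sum_mul_sq_le {ι R : Type*} [SeminormedRing R] (s : Finset ι) (u v : ι → R) :
    ‖∑ i ∈ s, u i * v i‖ₑ ^ 2 ≤ (∑ i ∈ s, ‖u i‖ₑ ^ 2) * ∑ i ∈ s, ‖v i‖ₑ ^ 2 := by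
  have h : ‖∑ i ∈ s, u i * v i‖₊ ^ 2 ≤ (∑ i ∈ s, ‖u i‖₊ ^ 2) * ∑ i ∈ s, ‖v i‖₊ ^ 2 :=
    calc ‖∑ i ∈ s, u i * v i‖₊ ^ 2 ≤ (∑ i ∈ s, ‖u i‖₊ * ‖v i‖₊) ^ 2 := by
          gcongr
          exact (nnnorm_sum_le _ _).trans (Finset.sum_le_sum fun i _ => nnnorm_mul_le _ _)
      _ ≤ _ := Finset.sum_mul_sq_le_sq_mul_sq _ _ _
  simp only [enorm_eq_nnnorm]
  exact_mod_cast h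

theorem sum_image_enorm_sum_fiber_mul_sq_le {ι κ R : Type*} [DecidableEq κ] [SeminormedRing R]
    (T : Finset ι) (f : ι → κ) (u v : ι → R) {W : ℝ≥0∞}
    (hW : ∀ k, ∑ i ∈ T with f i = k, ‖u i‖ₑ ^ 2 ≤ W) :
    ∑ k ∈ T.image f, ‖∑ i ∈ T with f i = k, u i * v i‖ₑ ^ 2 ≤ W * ∑ i ∈ T, ‖v i‖ₑ ^ 2 :=
  calc ∑ k ∈ T.image f, ‖∑ i ∈ T with f i = k, u i * v i‖ₑ ^ 2
      ≤ ∑ k ∈ T.image f, W * ∑ i ∈ T with f i = k, ‖v i‖ₑ ^ 2 :=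
        Finset.sum_le_sum fun k _ => (enorm_sum_mul_sq_le _ _ _).trans (by gcongr; exact hW k)
    _ = W * ∑ i ∈ T, ‖v i‖ₑ ^ 2 := by
        rw [← Finset.mul_sum,
          Finset.sum_fiberwise_of_maps_to fun i hi => Finset.mem_image_of_mem f hi]

theorem sum_piFinset_enorm_prod_sq {ι 𝕜 : Type*} [NormedField 𝕜] (s : Finset ι) (a : ι → 𝕜)
    (l : ℕ) :
    ∑ p ∈ Fintype.piFinset (fun _ : Fin l => s), ‖∏ j, a (p j)‖ₑ ^ 2 =
      (∑ n ∈ s, ‖a n‖ₑ ^ 2) ^ l := by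
  classical
  rw [← Fin.prod_const, Finset.prod_univ_sum]
  simp only [enorm_eq_nnnorm, nnnorm_prod, ENNReal.ofNNReal_finsetProd, Finset.prod_pow]

theorem even_moment_method_general
    (d M l : ℕ)
    (P : (Fin d → ℤ) → (Fin M → ℤ))
    (w a : (Fin d → ℤ) → ℂ)
    (hw : (Function.support w).Finite) :
    (∫⁻ ξ : Fin M → AddCircle (1 : ℝ),
        (‖∑' n : Fin d → ℤ, w n * a n * ∏ i, fourier (-(P n i)) (ξ i)‖₊ : ℝ≥0∞) ^ (2 * l))
      ≤
    (⨆ t : Fin M → ℤ, ∑' ntup : Fin l → Fin d → ℤ,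
        if (∑ j, P (ntup j)) = t then ∏ j, (‖w (ntup j)‖₊ : ℝ≥0∞) ^ 2 else 0) *
      (∑' n : Fin d → ℤ, (‖a n‖₊ : ℝ≥0∞) ^ 2) ^ l := by
  classical
  simp only [← enorm_eq_nnnorm]
  set W := ⨆ t : Fin M → ℤ, ∑' ntup : Fin l → Fin d → ℤ,
    if (∑ j, P (ntup j)) = t then ∏ j, ‖w (ntup j)‖ₑ ^ 2 else 0
  set s := hw.toFinset
  set T := Fintype.piFinset fun _ : Fin l => s
  have hF (ξ : UnitAddTorus (Fin M)) : ∑' n, w n * a n * ∏ i, fourier (-(P n i)) (ξ i) =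
      ∑ n ∈ s, (w n * a n) * mFourier (-P n) ξ :=
    tsum_eq_sum' fun n hn => hw.mem_toFinset.mpr fun hwn => hn (by simp [hwn])
  have hfiber (k : Fin M → ℤ) : ∑ p ∈ T with ∑ j, -P (p j) = k, ‖∏ j, w (p j)‖ₑ ^ 2 ≤ W :=
    calc _ = ∑ p ∈ T, if ∑ j, P (p j) = -k then ∏ j, ‖w (p j)‖ₑ ^ 2 else 0 := by
          simp only [Finset.sum_filter, Finset.sum_neg_distrib, neg_eq_iff_eq_neg,
            enorm_eq_nnnorm, nnnorm_prod, ENNReal.ofNNReal_finsetProd, Finset.prod_pow]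
      _ ≤ _ := ENNReal.sum_le_tsum T
      _ ≤ W := le_iSup (fun t => ∑' p : Fin l → Fin d → ℤ,
          if ∑ j, P (p j) = t then ∏ j, ‖w (p j)‖ₑ ^ 2 else 0) (-k)
  calc ∫⁻ ξ : Fin M → AddCircle (1 : ℝ),
        ‖∑' n, w n * a n * ∏ i, fourier (-(P n i)) (ξ i)‖ₑ ^ (2 * l)
      = ∫⁻ ξ, ‖∑ p ∈ T, (∏ j, w (p j) * a (p j)) * mFourier (∑ j, -P (p j)) ξ‖ₑ ^ 2 := by
        refine lintegral_congr fun ξ => ?_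
        rw [hF, pow_mul', ← enorm_pow, sum_mul_mFourier_pow]
    _ = ∑ k ∈ T.image fun p => ∑ j, -P (p j),
          ‖∑ p ∈ T with ∑ j, -P (p j) = k, (∏ j, w (p j)) * ∏ j, a (p j)‖ₑ ^ 2 := by
        simp only [lintegral_enorm_sum_mul_mFourier_comp_sq, Finset.prod_mul_distrib]
    _ ≤ W * ∑ p ∈ T, ‖∏ j, a (p j)‖ₑ ^ 2 := sum_image_enorm_sum_fiber_mul_sq_le _ _ _ _ hfiber
    _ ≤ W * (∑' n, ‖a n‖ₑ ^ 2) ^ l := by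
        rw [sum_piFinset_enorm_prod_sq]
        gcongr
        exact ENNReal.sum_le_tsum s

/-- the even moment method.  For any `P : ℤ^d → ℤ^M`, any finitely
supported weight `w` and any `a : ℤ^d → ℂ`,
`∫_{𝕋^M} |Σ_n w(n) a(n) e^{-2πi P(n)·ξ}|^{2l} dξ
  ≤ (sup_t Σ_{P(n⁽¹⁾)+⋯+P(n⁽ˡ⁾)=t} Π |w(n⁽ⁱ⁾)|²) · (Σ |a(n)|²)^l`. -/
theorem even_moment_method
    (d M l : ℕ) (hd : 1 ≤ d) (hM : 1 ≤ M) (hl : 1 ≤ l)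
    (P : (Fin d → ℤ) → (Fin M → ℤ))
    (w a : (Fin d → ℤ) → ℂ)
    (hw : (Function.support w).Finite) :
    (∫⁻ ξ : Fin M → AddCircle (1 : ℝ),
        (‖∑' n : Fin d → ℤ, w n * a n * ∏ i, fourier (-(P n i)) (ξ i)‖₊ : ℝ≥0∞) ^ (2 * l))
      ≤
    (⨆ t : Fin M → ℤ, ∑' ntup : Fin l → Fin d → ℤ,
        if (∑ j, P (ntup j)) = t then ∏ j, (‖w (ntup j)‖₊ : ℝ≥0∞) ^ 2 else 0) *
      (∑' n : Fin d → ℤ, (‖a n‖₊ : ℝ≥0∞) ^ 2) ^ l :=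
  even_moment_method_general d M l P w a hw
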